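/- arXiv:2006.09111 — 6 statements merged into one kernel-verified Lean document; each statement's English description precedes it below -/
import Mathlib

section
/- For any constant A ≥ 1, the function g(u) = A·u² − min{u², a} is convex on ℝ, where a > 0. -/
/-! Since `A u² - min(u², a) = max((A - 1) u², A u² - a)`, the function is a maximum of two convex
quadratics once `A ≥ 1`. -/

open Set

section
variable {𝕜 : Type*} [CommRing 𝕜] [LinearOrder 𝕜] [IsStrictOrderedRing 𝕜]

lemma convexOn_const_mul_sq {c : 𝕜} (hc : 0 ≤ c) : ConvexOn 𝕜 univ (fun u : 𝕜 => c * u ^ 2) := by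
  simpa only [smul_eq_mul] using (Even.convexOn_pow (n := 2) even_two).smul hc

lemma mul_sub_min_eq_max_sub (A x a : 𝕜) : A * x - min x a = max ((A - 1) * x) (A * x - a) := by
  rw [sub_one_mul, max_sub_sub_left]

end

theorem stmt_0_general (a A : ℝ) (hA : 1 ≤ A) :
    ConvexOn ℝ Set.univ (fun u : ℝ => A * u ^ 2 - min (u ^ 2) a) := by
  have hquad : ConvexOn ℝ univ (fun u : ℝ => (A - 1) * u ^ 2) :=
    convexOn_const_mul_sq (by linarith)
  have hshift : ConvexOn ℝ univ (fun u : ℝ => A * u ^ 2 - a) :=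
    (convexOn_const_mul_sq (by linarith)).sub (concaveOn_const a convex_univ)
  rw [funext fun u => mul_sub_min_eq_max_sub A (u ^ 2) a]
  exact hquad.sup hshift

theorem stmt_0 (a A : ℝ) (ha : 0 < a) (hA : 1 ≤ A) :
    ConvexOn ℝ Set.univ (fun u : ℝ => A * u ^ 2 - min (u ^ 2) a) :=
  stmt_0_general a A hA
end

section
/- For any constant A ≥ 1 and a > 0, the function g(u) = A·u² − min{(max{u,0})², a} is convex on ℝ. -/
/-!
Write `A u² - min (u₊², a) = (A u² - u₊²) + (u₊² - a)₊`. The second summand is the positive part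
of a convex function shifted by a constant. For the first, `A u² - u₊² = (A - 1) u² + u₋²`, a sum
of convex functions as soon as `A ≥ 1`.
-/

open Set

section

variable {E : Type*} [AddCommGroup E] [Module ℝ E] {s : Set E} {f : E → ℝ}

lemma ConvexOn.max_zero_sq (hf : ConvexOn ℝ s f) : ConvexOn ℝ s fun x => max (f x) 0 ^ 2 :=
  (hf.sup (convexOn_const 0 hf.1)).pow (fun x _ => le_max_right (f x) 0) 2

lemma ConvexOn.max_sub_const_zero (hf : ConvexOn ℝ s f) (a : ℝ) :
    ConvexOn ℝ s fun x => max (f x - a) 0 :=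
  (hf.sub (concaveOn_const a hf.1)).sup (convexOn_const 0 hf.1)

end

lemma convexOn_mul_sq_sub_max_zero_sq {A : ℝ} (hA : 1 ≤ A) :
    ConvexOn ℝ univ fun u : ℝ => A * u ^ 2 - max u 0 ^ 2 := by
  have hsq : ConvexOn ℝ univ fun u : ℝ => (A - 1) * u ^ 2 :=
    (Even.convexOn_pow even_two).smul (sub_nonneg.mpr hA)
  have hneg : ConvexOn ℝ univ fun u : ℝ => max (-u) 0 ^ 2 :=
    (concaveOn_id convex_univ).neg.max_zero_sq
  have hsplit : (fun u : ℝ => A * u ^ 2 - max u 0 ^ 2) =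
      fun u => (A - 1) * u ^ 2 + max (-u) 0 ^ 2 := by
    funext u
    rcases le_total u 0 with hu | hu
    · rw [max_eq_right hu, max_eq_left (neg_nonneg.mpr hu)]; ring
    · rw [max_eq_left hu, max_eq_right (neg_nonpos.mpr hu)]; ring
  rw [hsplit]
  exact hsq.add hneg

theorem stmt_2_general (a A : ℝ) (hA : 1 ≤ A) :
    ConvexOn ℝ Set.univ (fun u : ℝ => A * u ^ 2 - min ((max u 0) ^ 2) a) := by
  have hsplit : (fun u : ℝ => A * u ^ 2 - min ((max u 0) ^ 2) a) =
      fun u => (A * u ^ 2 - max u 0 ^ 2) + max (max u 0 ^ 2 - a) 0 := by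
    funext u
    have hsub_min : max u 0 ^ 2 - min (max u 0 ^ 2) a = max (max u 0 ^ 2 - a) 0 := by
      rw [← max_sub_sub_left, sub_self, max_comm]
    linarith [hsub_min]
  rw [hsplit]
  exact (convexOn_mul_sq_sub_max_zero_sq hA).add
    ((convexOn_id convex_univ).max_zero_sq.max_sub_const_zero a)

theorem stmt_2 (a A : ℝ) (ha : 0 < a) (hA : 1 ≤ A) :
    ConvexOn ℝ Set.univ (fun u : ℝ => A * u ^ 2 - min ((max u 0) ^ 2) a) :=
  stmt_2_general a A hA
end

section
/- Let a > 0 and define the smoothed ramp loss ψ(u) = (2/a)·(u₊)² if u ≤ a/2 and ψ(u) = a − (2/a)·((a−u)₊)² if u > a/2, where u₊ = max(u,0). Then for any A ≥ 2/a, the function A·u² − ψ(u) is convex on ℝ. -/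
/-!
Writing `h t = (max t 0)²`, the smoothed ramp loss is
`ψ u = (2/a) (h u - 2 h (u - a/2) + h (u - a))`, so it is differentiable with derivative
`(4/a) · max (min u (a - u)) 0`, a tent function of slope at most `4/a`. Hence the derivative
`2 A u - ψ' u` of `A u² - ψ u` is monotone as soon as `2 A ≥ 4/a`, which gives convexity.
-/

noncomputable def smoothRamp (a u : ℝ) : ℝ :=
  if u ≤ a / 2 then 2 / a * max u 0 ^ 2 else a - 2 / a * max (a - u) 0 ^ 2

theorem hasDerivAt_sq_max_zero (x : ℝ) :
    HasDerivAt (fun u : ℝ => max u 0 ^ 2) (2 * max x 0) x := by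
  -- at the kink `0` the derivative is recovered from continuity of `2 * max y 0`
  refine hasDerivAt_of_hasDerivAt_of_ne' (f := fun u : ℝ => max u 0 ^ 2) (g := fun y => 2 * max y 0)
    (x := 0) (fun y hy => ?_) (by fun_prop) (by fun_prop) x
  rcases hy.lt_or_gt with hy | hy
  · have hzero : (fun u : ℝ => max u 0 ^ 2) =ᶠ[nhds y] fun _ => 0 := by
      filter_upwards [eventually_lt_nhds hy] with u hu
      simp [max_eq_right hu.le]
    simpa [max_eq_right hy.le] using (hasDerivAt_const y (0 : ℝ)).congr_of_eventuallyEq hzero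
  · have hsq : (fun u : ℝ => max u 0 ^ 2) =ᶠ[nhds y] fun u => u ^ 2 := by
      filter_upwards [eventually_gt_nhds hy] with u hu
      rw [max_eq_left hu.le]
    simpa [max_eq_left hy.le] using (hasDerivAt_pow 2 y).congr_of_eventuallyEq hsq

theorem smoothRamp_eq_sq_max_combination (a u : ℝ) (ha : 0 < a) :
    smoothRamp a u = 2 / a * (max u 0 ^ 2 - 2 * max (u - a / 2) 0 ^ 2 + max (u - a) 0 ^ 2) := by
  unfold smoothRamp
  split_ifs with hu
  · rw [max_eq_right (by linarith : u - a / 2 ≤ 0), max_eq_right (by linarith : u - a ≤ 0)]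
    ring
  · rw [max_eq_left (by linarith : 0 ≤ u), max_eq_left (by linarith : 0 ≤ u - a / 2)]
    rcases le_total u a with hua | hua
    · rw [max_eq_right (by linarith : u - a ≤ 0), max_eq_left (by linarith : 0 ≤ a - u)]
      field_simp
      ring
    · rw [max_eq_left (by linarith : 0 ≤ u - a), max_eq_right (by linarith : a - u ≤ 0)]
      field_simp
      ring

theorem max_sub_two_mul_max_add_max (a u : ℝ) (ha : 0 ≤ a) :
    max u 0 - 2 * max (u - a / 2) 0 + max (u - a) 0 = max (min u (a - u)) 0 := by
  simp only [max_def, min_def]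
  split_ifs <;> linarith

theorem hasDerivAt_smoothRamp (a x : ℝ) (ha : 0 < a) :
    HasDerivAt (smoothRamp a) (4 / a * max (min x (a - x)) 0) x := by
  have hsq := hasDerivAt_sq_max_zero
  have h := (((hsq x).fun_sub (((hsq (x - a / 2)).comp_sub_const x (a / 2)).const_mul 2)).fun_add
    ((hsq (x - a)).comp_sub_const x a)).const_mul (2 / a)
  rw [← max_sub_two_mul_max_add_max a x ha.le, funext (smoothRamp_eq_sq_max_combination a · ha)]
  exact h.congr_deriv (by ring)

theorem lipschitzWith_max_min_sub (a : ℝ) :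
    LipschitzWith 1 fun x : ℝ => max (min x (a - x)) 0 := by
  have hsub : LipschitzWith 1 fun x : ℝ => a - x :=
    LipschitzWith.of_dist_le_mul fun x y => by rw [dist_sub_left, NNReal.coe_one, one_mul]
  simpa using (LipschitzWith.id.min hsub).max_const 0

theorem monotone_mul_sub_mul_of_lipschitzWith {g : ℝ → ℝ} (hg : LipschitzWith 1 g) {c k : ℝ}
    (hk : 0 ≤ k) (hkc : k ≤ c) : Monotone fun x => c * x - k * g x := by
  intro x y hxy
  have hgxy : g y - g x ≤ y - x := by
    have := hg.dist_le_mul y x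
    simp only [Real.dist_eq, NNReal.coe_one, one_mul] at this
    linarith [le_abs_self (g y - g x), abs_of_nonneg (sub_nonneg.2 hxy)]
  have hgk := mul_le_mul_of_nonneg_left hgxy hk
  have hkc' := mul_le_mul_of_nonneg_right hkc (sub_nonneg.2 hxy)
  linarith

theorem stmt_8 (a A : ℝ) (ha : 0 < a) (hA : 2 / a ≤ A) :
    ConvexOn ℝ Set.univ
      (fun u : ℝ => A * u ^ 2 -
        (if u ≤ a / 2 then (2 / a) * (max u 0) ^ 2
         else a - (2 / a) * (max (a - u) 0) ^ 2)) := by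
  change ConvexOn ℝ Set.univ fun u => A * u ^ 2 - smoothRamp a u
  have hderiv (x : ℝ) : HasDerivAt (fun u => A * u ^ 2 - smoothRamp a u)
      (2 * A * x - 4 / a * max (min x (a - x)) 0) x :=
    (((hasDerivAt_pow 2 x).const_mul A).fun_sub (hasDerivAt_smoothRamp a x ha)).congr_deriv
      (by ring)
  refine Monotone.convexOn_univ_of_deriv (fun x => (hderiv x).differentiableAt) ?_
  rw [funext fun x => (hderiv x).deriv]
  refine monotone_mul_sub_mul_of_lipschitzWith (lipschitzWith_max_min_sub a) (by positivity) ?_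
  linarith [show 4 / a = 2 * (2 / a) by ring]
end

section
/- Let a > 0 and define ψ(u) = a·(1 − exp(−(1/a)·(u₊)²)), where u₊ = max(u,0). Then for any A ≥ 1, the function g(u) = A·u² − ψ(u) is convex on ℝ. -/
/-!
With `ψ(u) = a (1 - exp (-(u₊)² / a))`, the derivative of `A u² - ψ u` is
`2 A u - 2 u₊ exp (-(u₊)² / a)`. For `u ≤ v`, the factor `exp (-(u₊)² / a)` lies in `(0, 1]` and
is antitone, and `u ↦ u₊` is monotone and 1-Lipschitz, so `ψ' v - ψ' u ≤ 2 (v - u)`.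
Hence the derivative is monotone once `A ≥ 1`.
-/

open Real Set

noncomputable def fengLoss (a u : ℝ) : ℝ := a * (1 - exp (-(1 / a) * max u 0 ^ 2))

noncomputable def fengLossDeriv (a u : ℝ) : ℝ := 2 * max u 0 * exp (-(1 / a) * max u 0 ^ 2)

lemma hasDerivAt_max_zero_sq (u : ℝ) :
    HasDerivAt (fun x : ℝ => max x 0 ^ 2) (2 * max u 0) u := by
  refine hasDerivAt_of_hasDerivAt_of_ne' (f := fun x : ℝ => max x 0 ^ 2) (g := fun x => 2 * max x 0)
    (x := 0) (fun y hy => ?_) (by fun_prop) (by fun_prop) u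
  rcases hy.lt_or_gt with hneg | hpos
  · have hzero : (fun x : ℝ => max x 0 ^ 2) =ᶠ[nhds y] fun _ => 0 := by
      filter_upwards [eventually_lt_nhds hneg] with x hx
      simp [max_eq_right hx.le]
    simpa [max_eq_right hneg.le] using (hasDerivAt_const y (0 : ℝ)).congr_of_eventuallyEq hzero
  · have hsq : (fun x : ℝ => max x 0 ^ 2) =ᶠ[nhds y] fun x => x ^ 2 := by
      filter_upwards [eventually_gt_nhds hpos] with x hx
      rw [max_eq_left hx.le]
    simpa [max_eq_left hpos.le] using (hasDerivAt_pow 2 y).congr_of_eventuallyEq hsq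

lemma hasDerivAt_fengLoss {a : ℝ} (ha : a ≠ 0) (u : ℝ) :
    HasDerivAt (fengLoss a) (fengLossDeriv a u) u := by
  have hexp := ((hasDerivAt_max_zero_sq u).const_mul (-(1 / a))).exp
  refine (((hasDerivAt_const u (1 : ℝ)).sub hexp).const_mul a).congr_deriv ?_
  simp only [fengLossDeriv]
  field_simp
  ring

lemma fengLossDeriv_sub_le {a u v : ℝ} (ha : 0 < a) (huv : u ≤ v) :
    fengLossDeriv a v - fengLossDeriv a u ≤ 2 * (v - u) := by
  set eu := exp (-(1 / a) * max u 0 ^ 2)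
  set ev := exp (-(1 / a) * max v 0 ^ 2)
  have hmax : max u 0 ≤ max v 0 := max_le_max_right 0 huv
  have hmax_sub : max v 0 - max u 0 ≤ v - u :=
    (le_abs_self _).trans <| (abs_max_sub_max_le_abs v u 0).trans_eq (abs_of_nonneg (by linarith))
  have hev_le_eu : ev ≤ eu := by
    have hsq : max u 0 ^ 2 ≤ max v 0 ^ 2 := pow_le_pow_left₀ (le_max_right u 0) hmax 2
    exact exp_le_exp.mpr (by nlinarith [one_div_pos.mpr ha])
  have hev_le_one : ev ≤ 1 := exp_le_one_iff.mpr <| by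
    nlinarith [sq_nonneg (max v 0), one_div_pos.mpr ha]
  have hmax_u_nonneg : 0 ≤ max u 0 := le_max_right u 0
  calc fengLossDeriv a v - fengLossDeriv a u
      = 2 * (max v 0 * ev - max u 0 * eu) := by simp only [fengLossDeriv]; ring
    _ ≤ 2 * ((max v 0 - max u 0) * ev) := by
      nlinarith [mul_le_mul_of_nonneg_left hev_le_eu hmax_u_nonneg]
    _ ≤ 2 * (max v 0 - max u 0) := by nlinarith
    _ ≤ 2 * (v - u) := by linarith

theorem stmt_10 (a A : ℝ) (ha : 0 < a) (hA : 1 ≤ A) :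
    ConvexOn ℝ Set.univ
      (fun u : ℝ => A * u ^ 2 - a * (1 - Real.exp (-(1 / a) * (max u 0) ^ 2))) := by
  change ConvexOn ℝ univ fun u => A * u ^ 2 - fengLoss a u
  set f' : ℝ → ℝ := fun u => 2 * A * u - fengLossDeriv a u
  have hf : ∀ u, HasDerivAt (fun u => A * u ^ 2 - fengLoss a u) (f' u) u := fun u => by
    refine (((hasDerivAt_pow 2 u).const_mul A).sub (hasDerivAt_fengLoss ha.ne' u)).congr_deriv ?_
    simp only [f']
    ring
  have hf'_mono : Monotone f' := fun u v huv => by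
    have := fengLossDeriv_sub_le ha huv
    simp only [f']
    nlinarith
  refine Monotone.convexOn_univ_of_deriv (fun u => (hf u).differentiableAt) ?_
  rwa [funext fun u => (hf u).deriv]
end

section
/- For every finite constant A > 0 and every ε ≥ 0, the function g(u) = A·u² − max(|u| − ε, 0) is not convex on ℝ. -/
theorem stmt_14 (A ε : ℝ) (hA : 0 < A) (hε : 0 ≤ ε) :
    ¬ ConvexOn ℝ Set.univ (fun u : ℝ => A * u ^ 2 - max (|u| - ε) 0) := by
  intro hc
  set h : ℝ := 1 / (4 * A) with hh
  have hhpos : 0 < h := by positivity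
  have key := hc.2 (Set.mem_univ (ε - h)) (Set.mem_univ (ε + h))
    (by norm_num : (0:ℝ) ≤ 1/2) (by norm_num : (0:ℝ) ≤ 1/2) (by norm_num)
  simp only [smul_eq_mul] at key
  have hmid : (1/2 : ℝ) * (ε - h) + (1/2 : ℝ) * (ε + h) = ε := by ring
  rw [hmid] at key
  -- evaluate the three function values
  have e1 : |ε| = ε := abs_of_nonneg hε
  have e2 : |ε + h| = ε + h := abs_of_nonneg (by linarith)
  have hεval : max (|ε| - ε) 0 = 0 := by rw [e1]; simp
  have hpval : max (|ε + h| - ε) 0 = h := by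
    rw [e2]; rw [max_eq_left (by linarith)]; ring
  have hmval : 0 ≤ max (|ε - h| - ε) 0 := le_max_right _ _
  simp only [hεval, hpval] at key
  -- key : A * ε^2 - 0 ≤ 1/2 * (A*(ε-h)^2 - max ...) + 1/2 * (A*(ε+h)^2 - h)
  have habs : |ε - h| ^ 2 = (ε - h) ^ 2 := sq_abs _
  have h2 : 2 * A * h ^ 2 < h := by
    have heq : 2 * A * h ^ 2 = h / 2 := by
      rw [hh]; field_simp; ring
    linarith
  nlinarith [key, hmval]
end

section
/- Let δ > 0, a ≥ δ/2, and define the truncated Huber loss ψ(u) = min{h_δ(u), a}, where h_δ(u) = u²/(2δ) for |u| ≤ δ and h_δ(u) = |u| − δ/2 for |u| > δ. Then for any A ≥ 1/(2δ), the function A·u² − ψ(u) is convex on ℝ. -/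
/-!
Since `A u² - min (h u) a = max (A u² - h u) (A u² - a)` and a maximum of convex functions is
convex, it suffices that `A u² - h_δ u` is convex. The Huber loss is `u² / (2δ)` minus a
squared hinge, `h_δ u = (u² - (max (|u| - δ) 0)²) / (2δ)`, so
`A u² - h_δ u = (A - 1/(2δ)) u² + (max (|u| - δ) 0)² / (2δ)` is a nonnegative combination of
convex functions.
-/

open Set

theorem ConvexOn.sub_min {𝕜 E β : Type*} [Semiring 𝕜] [PartialOrder 𝕜] [AddCommMonoid E]
    [AddCommGroup β] [LinearOrder β] [IsOrderedAddMonoid β] [SMul 𝕜 E] [Module 𝕜 β]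
    [PosSMulStrictMono 𝕜 β] {s : Set E} {f g h : E → β}
    (hg : ConvexOn 𝕜 s fun x => f x - g x) (hh : ConvexOn 𝕜 s fun x => f x - h x) :
    ConvexOn 𝕜 s fun x => f x - min (g x) (h x) := by
  simp_rw [← max_sub_sub_left]
  exact hg.sup hh

noncomputable def huberLoss (δ u : ℝ) : ℝ :=
  if |u| ≤ δ then u ^ 2 / (2 * δ) else |u| - δ / 2

theorem huberLoss_eq_sub_sq_hinge {δ : ℝ} (hδ : δ ≠ 0) (u : ℝ) :
    huberLoss δ u = u ^ 2 / (2 * δ) - max (|u| - δ) 0 ^ 2 / (2 * δ) := by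
  unfold huberLoss
  split_ifs with hu
  · rw [max_eq_right (by linarith), zero_pow two_ne_zero, zero_div, sub_zero]
  · rw [max_eq_left (by linarith), ← sq_abs u]
    field_simp
    ring

theorem convexOn_sq_hinge (c : ℝ) : ConvexOn ℝ univ fun u : ℝ => max (|u| - c) 0 ^ 2 :=
  ((convexOn_univ_norm.sub (concaveOn_const c convex_univ)).sup
    (convexOn_const 0 convex_univ)).pow (fun _ _ => le_max_right _ _) 2

theorem convexOn_mul_sq_sub_huberLoss {δ A : ℝ} (hδ : 0 < δ) (hA : 1 / (2 * δ) ≤ A) :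
    ConvexOn ℝ univ fun u => A * u ^ 2 - huberLoss δ u := by
  have hsq : ConvexOn ℝ univ fun u : ℝ => (A - 1 / (2 * δ)) * u ^ 2 :=
    (even_two.convexOn_pow (𝕜 := ℝ)).smul (sub_nonneg.2 hA)
  have hhinge : ConvexOn ℝ univ fun u : ℝ => 1 / (2 * δ) * max (|u| - δ) 0 ^ 2 :=
    (convexOn_sq_hinge δ).smul (by positivity)
  refine (hsq.add hhinge).congr fun u _ => ?_
  rw [Pi.add_apply, huberLoss_eq_sub_sq_hinge hδ.ne']
  ring

theorem stmt_16_general (δ a A : ℝ) (hδ : 0 < δ) (hA : 1 / (2 * δ) ≤ A) :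
    ConvexOn ℝ Set.univ
      (fun u : ℝ => A * u ^ 2 -
        min (if |u| ≤ δ then u ^ 2 / (2 * δ) else |u| - δ / 2) a) := by
  have hA₀ : 0 ≤ A := (by positivity : (0 : ℝ) ≤ 1 / (2 * δ)).trans hA
  exact (convexOn_mul_sq_sub_huberLoss hδ hA).sub_min
    (((even_two.convexOn_pow (𝕜 := ℝ)).smul hA₀).sub (concaveOn_const a convex_univ))

theorem stmt_16 (δ a A : ℝ) (hδ : 0 < δ) (ha : δ / 2 ≤ a) (hA : 1 / (2 * δ) ≤ A) :
    ConvexOn ℝ Set.univ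
      (fun u : ℝ => A * u ^ 2 -
        min (if |u| ≤ δ then u ^ 2 / (2 * δ) else |u| - δ / 2) a) :=
  stmt_16_general δ a A hδ hA
end
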